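/- The map HQ(A,σ,Eˣ) → H²(A,Eˣ)^σ × Hom(A^σ, Eˣ) sending [(a,b)] to the pair ([a], b|_{A^σ}) is a group isomorphism. (This is the isomorphism of split short exact sequences 0 → H²(A,Eˣ)^σ → HQ(A,σ,Eˣ) → Hom(A^σ,Eˣ) → 0 of Proposition 3.7 of the paper, describing isomorphism classes of quasicharacter sheaves on étale commutative group schemes in the stalk/cocycle model.) -/

import Mathlib

/-! Basic setup: cocycle description of quasicharacter sheaves on étale
commutative group schemes, following the paper's stalk description. -/

section QCS

variable (A : Type) [AddCommGroup A] (M : Type) [CommGroup M]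

/-- The 2-cocycle condition for a function `a : A × A → M` (trivial action). -/
def IsCocycle (a : A → A → M) : Prop :=
  ∀ x y z : A, a (x + y) z * a x y = a x (y + z) * a y z

/-- The coboundary of a function `d : A → M`. -/
def cobound (d : A → M) : A → A → M :=
  fun x y => d (x + y) * (d x)⁻¹ * (d y)⁻¹

/-- The group of 2-cocycles `Z²(A,M)`. -/
def Z2 : Subgroup (A → A → M) where
  carrier := {a | IsCocycle A M a}
  one_mem' := by intro x y z; simp
  mul_mem' := by
    intro a b ha hb
    intro x y z
    simp only [Pi.mul_apply]
    rw [mul_mul_mul_comm, ha x y z, hb x y z, mul_mul_mul_comm]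
  inv_mem' := by
    intro a ha
    intro x y z
    simp only [Pi.inv_apply]
    rw [← mul_inv, ← mul_inv, ha x y z]

lemma mem_Z2_iff {a : A → A → M} : a ∈ Z2 A M ↔ IsCocycle A M a := Iff.rfl

/-- The coboundary map, as a homomorphism. -/
def coboundHom : (A → M) →* (A → A → M) where
  toFun := cobound A M
  map_one' := by funext x y; simp [cobound]
  map_mul' := by
    intro d e
    funext x y
    simp only [cobound, Pi.mul_apply, mul_inv]
    simp [mul_comm, mul_left_comm, mul_assoc]

/-- The group of 2-coboundaries `B²(A,M)`. -/
def B2 : Subgroup (A → A → M) := (coboundHom A M).range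

/-- The second cohomology group `H²(A,M)` (trivial action). -/
abbrev H2 : Type := Z2 A M ⧸ (B2 A M).subgroupOf (Z2 A M)

variable (σ : A ≃+ A)

/-- The compatibility condition between a 2-cocycle `a` and a 1-cochain `b`
relative to the automorphism `σ`. -/
def IsCompat (a : A → A → M) (b : A → M) : Prop :=
  ∀ x y : A, a (σ x) (σ y) * (a x y)⁻¹ = b (x + y) * (b x)⁻¹ * (b y)⁻¹

/-- The group `ZQ(A,σ,M)` of quasicharacter data. -/
def ZQ : Subgroup ((A → A → M) × (A → M)) where
  carrier := {p | IsCocycle A M p.1 ∧ IsCompat A M σ p.1 p.2}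
  one_mem' := ⟨fun x y z => by simp, fun x y => by simp⟩
  mul_mem' := by
    rintro p q ⟨hp1, hp2⟩ ⟨hq1, hq2⟩
    refine ⟨mul_mem (show p.1 ∈ Z2 A M from hp1) (show q.1 ∈ Z2 A M from hq1), ?_⟩
    intro x y
    have key : (p.1 (σ x) (σ y) * (p.1 x y)⁻¹) * (q.1 (σ x) (σ y) * (q.1 x y)⁻¹)
        = (p.2 (x + y) * (p.2 x)⁻¹ * (p.2 y)⁻¹) * (q.2 (x + y) * (q.2 x)⁻¹ * (q.2 y)⁻¹) := by
      rw [hp2 x y, hq2 x y]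
    simpa [Prod.fst_mul, Prod.snd_mul, Pi.mul_apply, mul_inv, mul_comm, mul_left_comm,
      mul_assoc] using key
  inv_mem' := by
    rintro p ⟨hp1, hp2⟩
    refine ⟨inv_mem (show p.1 ∈ Z2 A M from hp1), ?_⟩
    intro x y
    have key := congrArg (·⁻¹) (hp2 x y)
    simpa [Prod.fst_inv, Prod.snd_inv, Pi.inv_apply, mul_inv, mul_comm, mul_left_comm,
      mul_assoc] using key

lemma mem_ZQ_iff {p : (A → A → M) × (A → M)} :
    p ∈ ZQ A M σ ↔ IsCocycle A M p.1 ∧ IsCompat A M σ p.1 p.2 := Iff.rfl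

/-- The map `d ↦ (x ↦ d(σ x)·d(x)⁻¹)`, as a homomorphism. -/
def sigmaDiff : (A → M) →* (A → M) where
  toFun d := fun x => d (σ x) * (d x)⁻¹
  map_one' := by funext x; simp
  map_mul' := by
    intro d e
    funext x
    simp only [Pi.mul_apply, mul_inv]
    simp [mul_comm, mul_left_comm, mul_assoc]

/-- The subgroup `BQ(A,σ,M)` of coboundary quasicharacter data. -/
def BQ : Subgroup ((A → A → M) × (A → M)) :=
  ((coboundHom A M).prod (sigmaDiff A M σ)).range

/-- `HQ(A,σ,M)`: the group of quasicharacter data modulo coboundaries. -/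
abbrev HQ : Type := ZQ A M σ ⧸ (BQ A M σ).subgroupOf (ZQ A M σ)

/-- The subgroup `A^σ` of fixed points of `σ`. -/
def fixedAdd : AddSubgroup A where
  carrier := {x | σ x = x}
  zero_mem' := by simp
  add_mem' := by
    intro a b ha hb
    simp only [Set.mem_setOf_eq] at *
    rw [map_add, ha, hb]
  neg_mem' := by
    intro a ha
    simp only [Set.mem_setOf_eq] at *
    rw [map_neg, ha]

/-- The restriction of the 1-cochain part of a quasicharacter datum to `A^σ`,
as a character of `A^σ`. -/
def trZ (p : ZQ A M σ) : AddChar (fixedAdd A σ) M where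
  toFun := fun x => (p : (A → A → M) × (A → M)).2 (x : A)
  map_zero_eq_one' := by
    have h := p.prop.2 (0 : A) 0
    simp at h
    simpa using h
  map_add_eq_mul' := by
    rintro ⟨x, hx⟩ ⟨y, hy⟩
    have hx' : σ x = x := hx
    have hy' : σ y = y := hy
    have h := p.prop.2 x y
    rw [hx', hy', mul_inv_cancel] at h
    have h2 : (p : (A → A → M) × (A → M)).2 (x + y)
        * ((p : (A → A → M) × (A → M)).2 x)⁻¹
        * ((p : (A → A → M) × (A → M)).2 y)⁻¹ = 1 := h.symm
    rw [mul_inv_eq_one] at h2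
    rw [mul_inv_eq_iff_eq_mul] at h2
    simpa [mul_comm] using h2

/-- The trace map `ZQ(A,σ,M) → Hom(A^σ, M)`, `(a,b) ↦ b|_{A^σ}`. -/
def trZHom : ZQ A M σ →* AddChar (fixedAdd A σ) M where
  toFun := trZ A M σ
  map_one' := by
    apply AddChar.ext
    intro x
    rfl
  map_mul' := by
    intro p q
    apply AddChar.ext
    intro x
    rfl

lemma trZHom_trivial_on_BQ :
    (BQ A M σ).subgroupOf (ZQ A M σ) ≤ (trZHom A M σ).ker := by
  rintro ⟨p, hpZ⟩ hpB
  obtain ⟨d, hd⟩ := hpB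
  have hd' : ((coboundHom A M).prod (sigmaDiff A M σ)) d = p := hd
  have hd2 : p.2 = fun x => d (σ x) * (d x)⁻¹ := by rw [← hd']; rfl
  apply AddChar.ext
  rintro ⟨x, hx⟩
  have hx' : σ x = x := hx
  show trZ A M σ ⟨p, hpZ⟩ _ = 1
  simp [trZ, hd2, hx']

/-- The trace-of-Frobenius homomorphism `Tr : HQ(A,σ,M) → Hom(A^σ,M)`. -/
def TrHom : HQ A M σ →* AddChar (fixedAdd A σ) M :=
  QuotientGroup.lift _ (trZHom A M σ) (trZHom_trivial_on_BQ A M σ)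

/-- The projection `ZQ(A,σ,M) → Z²(A,M)`, `(a,b) ↦ a`. -/
def zproj : ZQ A M σ →* Z2 A M where
  toFun := fun p => ⟨(p : (A → A → M) × (A → M)).1, p.prop.1⟩
  map_one' := rfl
  map_mul' := fun _ _ => rfl

lemma zproj_trivial_on_BQ :
    (BQ A M σ).subgroupOf (ZQ A M σ) ≤
      ((QuotientGroup.mk' ((B2 A M).subgroupOf (Z2 A M))).comp (zproj A M σ)).ker := by
  rintro ⟨p, hpZ⟩ hpB
  obtain ⟨d, hd⟩ := hpB
  have hd' : ((coboundHom A M).prod (sigmaDiff A M σ)) d = p := hd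
  have hd1 : p.1 = cobound A M d := by rw [← hd']; rfl
  simp only [MonoidHom.mem_ker, MonoidHom.comp_apply]
  rw [QuotientGroup.mk'_apply, QuotientGroup.eq_one_iff]
  show (zproj A M σ ⟨p, hpZ⟩ : A → A → M) ∈ B2 A M
  exact ⟨d, hd1.symm⟩

/-- The map `HQ(A,σ,M) → H²(A,M)` sending `[(a,b)]` to `[a]`. -/
def clsHom : HQ A M σ →* H2 A M :=
  QuotientGroup.lift _ ((QuotientGroup.mk' ((B2 A M).subgroupOf (Z2 A M))).comp (zproj A M σ))
    (zproj_trivial_on_BQ A M σ)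

/-- Precomposition with `σ × σ` on 2-cocycles. -/
def precompZ2 : Z2 A M →* Z2 A M where
  toFun := fun a => ⟨fun x y => (a : A → A → M) (σ x) (σ y), by
    intro x y z
    have := a.prop (σ x) (σ y) (σ z)
    simpa [map_add] using this⟩
  map_one' := rfl
  map_mul' := fun _ _ => rfl

lemma precompZ2_trivial : ((B2 A M).subgroupOf (Z2 A M)) ≤
    (((QuotientGroup.mk' ((B2 A M).subgroupOf (Z2 A M))).comp (precompZ2 A M σ))).ker := by
  rintro ⟨a, haZ⟩ haB
  obtain ⟨d, hd⟩ := haB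
  simp only [MonoidHom.mem_ker, MonoidHom.comp_apply]
  rw [QuotientGroup.mk'_apply, QuotientGroup.eq_one_iff]
  show (precompZ2 A M σ ⟨a, haZ⟩ : A → A → M) ∈ B2 A M
  refine ⟨fun x => d (σ x), ?_⟩
  have hd1 : a = cobound A M d := hd.symm
  funext x y
  show cobound A M (fun x => d (σ x)) x y = a (σ x) (σ y)
  rw [hd1]
  simp [cobound, map_add]

/-- The action of `σ` on `H²(A,M)`, `[a] ↦ [a ∘ (σ × σ)]`. -/
def H2act : H2 A M →* H2 A M :=
  QuotientGroup.lift _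
    ((QuotientGroup.mk' ((B2 A M).subgroupOf (Z2 A M))).comp (precompZ2 A M σ))
    (precompZ2_trivial A M σ)

/-- The subgroup `H²(A,M)^σ` of `σ`-fixed classes. -/
def H2fixed : Subgroup (H2 A M) where
  carrier := {c | H2act A M σ c = c}
  one_mem' := map_one _
  mul_mem' := by
    intro a b ha hb
    simp only [Set.mem_setOf_eq] at *
    rw [map_mul, ha, hb]
  inv_mem' := by
    intro a ha
    simp only [Set.mem_setOf_eq] at *
    rw [map_inv, ha]

end QCS

/-! The class `[a]` is `σ`-fixed exactly when `a ∘ (σ × σ) / a` is a coboundary `∂b`, i.e. when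
`a` is the first component of a datum `(a, b)`, and two such `b` differ by a character of `A`.
Since `Eˣ` is divisible, it is an injective `ℤ`-module. Hence every character of `A^σ` extends to
`A`, which gives surjectivity; and a character `ψ` of `A` trivial on `A^σ = ker (σ - 1)` factors
through `σ - 1`, i.e. `ψ = e ∘ σ / e`, which gives injectivity: an element of the kernel becomes
`(1, ψ)` of this kind after dividing by `(∂d, d ∘ σ / d)`, and `(1, e ∘ σ / e)` is the coboundary
datum of the character `e`. -/

open QuotientGroup

namespace AddChar

variable {A B M : Type*} [AddCommGroup A] [AddCommGroup B] [CommGroup M]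
  [DivisibleBy (Additive M) ℤ]

theorem exists_compAddMonoidHom_eq_of_injective {f : A →+ B} (hf : Function.Injective f)
    (χ : AddChar A M) : ∃ ψ : AddChar B M, ψ.compAddMonoidHom f = χ := by
  obtain ⟨h, hh⟩ := (Module.Baer.of_divisible (Additive M)).extension_property_addMonoidHom
    f hf χ.toAddMonoidHom
  exact ⟨toAddMonoidHomEquiv.symm h, DFunLike.ext _ _ fun a => congr(Additive.toMul ($hh a))⟩

theorem exists_compAddMonoidHom_eq_of_ker_le {f : A →+ B} (χ : AddChar A M)
    (hχ : ∀ a ∈ f.ker, χ a = 1) : ∃ ψ : AddChar B M, ψ.compAddMonoidHom f = χ := by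
  let χ' : AddChar (A ⧸ f.ker) M := toAddMonoidHomEquiv.symm <|
    QuotientAddGroup.lift f.ker χ.toAddMonoidHom fun a ha => congr(Additive.ofMul $(hχ a ha))
  obtain ⟨ψ, hψ⟩ := exists_compAddMonoidHom_eq_of_injective
    (QuotientAddGroup.kerLift_injective f) χ'
  exact ⟨ψ, DFunLike.ext _ _ fun a => DFunLike.congr_fun hψ (QuotientAddGroup.mk a)⟩

theorem exists_compAddMonoidHom_div_eq (f : A →+ A) (χ : AddChar A M)
    (hχ : ∀ a, f a = a → χ a = 1) : ∃ ψ : AddChar A M, ψ.compAddMonoidHom f / ψ = χ := by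
  obtain ⟨ψ, hψ⟩ := exists_compAddMonoidHom_eq_of_ker_le (f := f - AddMonoidHom.id A) χ
    fun a ha => hχ a (sub_eq_zero.mp ha)
  refine ⟨ψ, DFunLike.ext _ _ fun a => ?_⟩
  rw [← hψ, div_apply', compAddMonoidHom_apply, compAddMonoidHom_apply, AddMonoidHom.sub_apply,
    map_sub_eq_div, AddMonoidHom.id_apply]

end AddChar

noncomputable instance IsAlgClosed.divisibleByIntAdditiveUnits (E : Type*) [Field E]
    [IsAlgClosed E] : DivisibleBy (Additive Eˣ) ℤ :=
  letI : DivisibleBy (Additive Eˣ) ℕ := divisibleByOfSMulRightSurj _ _ fun {n} hn x => by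
    obtain ⟨z, hz⟩ := IsAlgClosed.exists_pow_nat_eq (x.toMul : E) (Nat.pos_of_ne_zero hn)
    have hz0 : z ≠ 0 := by
      rintro rfl
      exact x.toMul.ne_zero (by rw [← hz, zero_pow hn])
    exact ⟨.ofMul (Units.mk0 z hz0), congr(Additive.ofMul $(Units.ext hz))⟩
  AddGroup.divisibleByIntOfDivisibleByNat _

section Quasicharacters

variable {A : Type} [AddCommGroup A] {M : Type} [CommGroup M] {σ : A ≃+ A}

theorem isCompat_iff {a : A → A → M} {b : A → M} :
    IsCompat A M σ a b ↔ cobound A M b = a⁻¹ * fun x y => a (σ x) (σ y) := by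
  simp only [IsCompat, funext_iff, cobound, Pi.mul_apply, Pi.inv_apply]
  exact forall₂_congr fun x y => by rw [eq_comm, mul_comm (a x y)⁻¹]

theorem mk_mem_H2fixed_iff (a : Z2 A M) :
    (a : H2 A M) ∈ H2fixed A M σ ↔ ∃ b, IsCompat A M σ a b := by
  change (mk (precompZ2 A M σ a) : H2 A M) = mk a ↔ _
  rw [eq_comm, QuotientGroup.eq, Subgroup.mem_subgroupOf]
  simp only [isCompat_iff]
  rfl

theorem clsHom_mem_H2fixed (c : HQ A M σ) : clsHom A M σ c ∈ H2fixed A M σ := by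
  induction c using QuotientGroup.induction_on with
  | H p => exact (mk_mem_H2fixed_iff _).mpr ⟨_, p.prop.2⟩

variable (A M σ) in
def clsTrHom : HQ A M σ →* H2fixed A M σ × AddChar (fixedAdd A σ) M :=
  ((clsHom A M σ).codRestrict _ clsHom_mem_H2fixed).prod (TrHom A M σ)

theorem BQ_le_ZQ : BQ A M σ ≤ ZQ A M σ := by
  rintro _ ⟨d, rfl⟩
  refine ⟨fun x y z => ?_, fun x y => ?_⟩ <;> apply Additive.ofMul.injective <;>
    simp only [MonoidHom.prod_apply, coboundHom, sigmaDiff, MonoidHom.coe_mk, OneHom.coe_mk,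
      cobound, map_add, ofMul_mul, ofMul_inv, add_assoc] <;> abel

variable (σ) in
def charZQ : AddChar A M →* ZQ A M σ where
  toFun ψ := ⟨(1, ψ), fun _ _ _ => rfl, fun x y => by simp [AddChar.map_add_eq_mul]⟩
  map_one' := rfl
  map_mul' _ _ := Subtype.ext (Prod.ext (mul_one 1).symm rfl)

@[simp]
theorem coe_charZQ (ψ : AddChar A M) :
    (charZQ σ ψ : (A → A → M) × (A → M)) = ((1 : A → A → M), ⇑ψ) := rfl

theorem trZHom_charZQ (ψ : AddChar A M) :
    trZHom A M σ (charZQ σ ψ) = ψ.compAddMonoidHom (fixedAdd A σ).subtype :=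
  AddChar.ext _ _ fun _ => rfl

theorem exists_charZQ_eq (q : ZQ A M σ) (hq : q.val.1 = 1) : ∃ ψ, charZQ σ ψ = q := by
  have hb := q.prop.2
  rw [hq] at hb
  have hb_add : ∀ x y, q.val.2 (x + y) = q.val.2 x * q.val.2 y := fun x y => by
    have h := hb x y
    simp only [Pi.one_apply, mul_one, inv_one] at h
    rw [eq_comm, mul_inv_eq_one, mul_inv_eq_iff_eq_mul] at h
    rw [h, mul_comm]
  have hb_zero : q.val.2 0 = 1 := by simpa using hb_add 0 0
  exact ⟨⟨q.val.2, hb_zero, hb_add⟩, Subtype.ext (Prod.ext hq.symm rfl)⟩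

theorem charZQ_compAddMonoidHom_div_mem_BQ (ψ : AddChar A M) :
    charZQ σ (ψ.compAddMonoidHom σ / ψ) ∈ (BQ A M σ).subgroupOf (ZQ A M σ) := by
  refine ⟨ψ, Prod.ext (funext₂ fun x y => ?_) (funext fun x => ?_)⟩
  · simp [coboundHom, cobound, AddChar.map_add_eq_mul]
  · simp [sigmaDiff, div_eq_mul_inv]

theorem mem_BQ_of_mem_B2_of_trZHom_eq_one [DivisibleBy (Additive M) ℤ] (p : ZQ A M σ)
    (h1 : (zproj A M σ p : A → A → M) ∈ B2 A M) (h2 : trZHom A M σ p = 1) :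
    p ∈ (BQ A M σ).subgroupOf (ZQ A M σ) := by
  obtain ⟨d, hd⟩ := h1
  let β : ZQ A M σ := ⟨_, BQ_le_ZQ ⟨d, rfl⟩⟩
  have hβ : β ∈ (BQ A M σ).subgroupOf (ZQ A M σ) := ⟨d, rfl⟩
  obtain ⟨ψ, hψ⟩ := exists_charZQ_eq (p * β⁻¹) (mul_inv_eq_one.mpr hd.symm)
  have hψ_fixed : ∀ x, σ x = x → ψ x = 1 := fun x hx => by
    have hp : p.val.2 x = 1 := DFunLike.congr_fun h2 ⟨x, hx⟩
    calc ψ x = p.val.2 x * (d (σ x) * (d x)⁻¹)⁻¹ :=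
          congr((↑($hψ) : (A → A → M) × (A → M)).2 x)
      _ = 1 := by rw [hp, hx, mul_inv_cancel, inv_one, mul_one]
  obtain ⟨e, rfl⟩ := AddChar.exists_compAddMonoidHom_div_eq (σ : A →+ A) ψ hψ_fixed
  exact (Subgroup.mul_mem_cancel_right _ (inv_mem hβ)).mp
    (hψ ▸ charZQ_compAddMonoidHom_div_mem_BQ e)

theorem clsTrHom_injective [DivisibleBy (Additive M) ℤ] :
    Function.Injective (clsTrHom A M σ) := by
  refine (injective_iff_map_eq_one _).mpr fun c hc => ?_
  induction c using QuotientGroup.induction_on with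
  | H p =>
    rw [QuotientGroup.eq_one_iff]
    exact mem_BQ_of_mem_B2_of_trZHom_eq_one p
      ((QuotientGroup.eq_one_iff (zproj A M σ p)).mp congr(($hc).1.val)) congr(($hc).2)

theorem clsTrHom_surjective [DivisibleBy (Additive M) ℤ] :
    Function.Surjective (clsTrHom A M σ) := by
  rintro ⟨⟨c, hc⟩, χ⟩
  induction c using QuotientGroup.induction_on with
  | H a =>
    obtain ⟨b, hb⟩ := (mk_mem_H2fixed_iff a).mp hc
    let p : ZQ A M σ := ⟨(a, b), a.prop, hb⟩
    obtain ⟨ψ, hψ⟩ := AddChar.exists_compAddMonoidHom_eq_of_injective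
      (fixedAdd A σ).subtype_injective (χ / trZHom A M σ p)
    refine ⟨mk (p * charZQ σ ψ), Prod.ext (Subtype.ext ?_) ?_⟩
    · exact congr_arg mk (Subtype.ext (mul_one (a : A → A → M)))
    · change trZHom A M σ p * trZHom A M σ (charZQ σ ψ) = χ
      rw [trZHom_charZQ, hψ, mul_div_cancel]

end Quasicharacters

theorem HQ_iso_fixedH2_prod_characters_general
    (E : Type) [Field E] [IsAlgClosed E]
    (A : Type) [AddCommGroup A] (σ : A ≃+ A) :
    ∃ e : HQ A Eˣ σ ≃* (H2fixed A Eˣ σ) × AddChar (fixedAdd A σ) Eˣ,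
      ∀ c : HQ A Eˣ σ,
        ((e c).1 : H2 A Eˣ) = clsHom A Eˣ σ c ∧ (e c).2 = TrHom A Eˣ σ c :=
  ⟨MulEquiv.ofBijective (clsTrHom A Eˣ σ) ⟨clsTrHom_injective, clsTrHom_surjective⟩,
    fun _ => ⟨rfl, rfl⟩⟩

/-- The map `HQ(A,σ,Eˣ) → H²(A,Eˣ)^σ × Hom(A^σ, Eˣ)` sending `[(a,b)]`
to `([a], b|_{A^σ})` is a group isomorphism. -/
theorem HQ_iso_fixedH2_prod_characters
    (E : Type) [Field E] [IsAlgClosed E] [CharZero E]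
    (A : Type) [AddCommGroup A] (σ : A ≃+ A) :
    ∃ e : HQ A Eˣ σ ≃* (H2fixed A Eˣ σ) × AddChar (fixedAdd A σ) Eˣ,
      ∀ c : HQ A Eˣ σ,
        ((e c).1 : H2 A Eˣ) = clsHom A Eˣ σ c ∧ (e c).2 = TrHom A Eˣ σ c :=
  HQ_iso_fixedH2_prod_characters_general E A σ
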